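/- On the open book, suppose m_k > 0 for some leaf k (hence m_{k'} < 0 for all k' ≠ k). Then the Fréchet mean of Q exists, is unique, and equals μ = (k; m_k, μ_{1D}); i.e., it lies in the open leaf S_k with zero-th coordinate m_k. -/

import Mathlib

/-!
Expanding the squared open-book distance, the Fréchet function at `(k; a, v)` is, up to an
additive constant, `(a - m_k)² - m_k² + ‖v - μ_{1D}‖²`. Since the folded coordinates of two
different leaves sum to a nonpositive number, `m_k > 0` forces `m_{k'} < 0` for `k' ≠ k`; on such a
leaf `(a - m_{k'})² - m_{k'}² = a² - 2 a m_{k'} ≥ 0 > -m_k²` for `a ≥ 0`, so the unique minimizer is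
`(k; m_k, μ_{1D})`, where the value `-m_k²` is attained.
-/

open MeasureTheory

/-- The open-book distance on `K` copies of the half-space `H = [0,∞) × ℝ^D`. -/
noncomputable def obDist {K D : ℕ} (p q : Fin K × ℝ × EuclideanSpace ℝ (Fin D)) : ℝ :=
  Real.sqrt ((if p.1 = q.1 then (p.2.1 - q.2.1) ^ 2 else (p.2.1 + q.2.1) ^ 2)
    + ‖p.2.2 - q.2.2‖ ^ 2)

theorem forall_le_iff_eq_of_forall_lt {α β : Type*} [LinearOrder β] {f : α → β} {s : Set α}
    {x p : α} (hx : x ∈ s) (hlt : ∀ y ∈ s, y ≠ x → f x < f y) (hp : p ∈ s) :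
    (∀ q ∈ s, f p ≤ f q) ↔ p = x := by
  refine ⟨fun hmin => by_contra fun hne => (hlt p hp hne).not_ge (hmin x hx), ?_⟩
  rintro rfl q hq
  rcases eq_or_ne q p with rfl | hne
  · exact le_rfl
  · exact (hlt q hq hne).le

section Folding

variable {ι E : Type*} [DecidableEq ι]

/-- The zeroth coordinate under the folding map `f_k`. -/
def foldedFst (k : ι) (z : ι × ℝ × E) : ℝ := if z.1 = k then z.2.1 else -z.2.1

theorem foldedFst_add_foldedFst_nonpos {k k' : ι} (h : k ≠ k') {z : ι × ℝ × E}
    (hz : 0 ≤ z.2.1) : foldedFst k z + foldedFst k' z ≤ 0 := by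
  unfold foldedFst
  split_ifs with h₁ h₂ h₂
  · exact absurd (h₁.symm.trans h₂) h
  all_goals linarith

variable [MeasurableSpace ι] [MeasurableSingletonClass ι] [MeasurableSpace E]
  {Q : Measure (ι × ℝ × E)}

theorem measurable_foldedFst (k : ι) : Measurable (foldedFst (E := E) k) :=
  Measurable.ite (measurable_fst (measurableSet_singleton k))
    (measurable_fst.comp measurable_snd) (measurable_fst.comp measurable_snd).neg

theorem integrable_foldedFst (h0 : Integrable (fun z => z.2.1) Q) (k : ι) :
    Integrable (foldedFst k) Q :=
  h0.mono (measurable_foldedFst k).aestronglyMeasurable <| .of_forall fun z => by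
    unfold foldedFst; split_ifs <;> simp

theorem integral_foldedFst_neg_of_ne (hae : ∀ᵐ z ∂Q, 0 ≤ z.2.1)
    (h0 : Integrable (fun z => z.2.1) Q) {k k' : ι} (hk : 0 < ∫ z, foldedFst k z ∂Q)
    (h : k' ≠ k) : ∫ z, foldedFst k' z ∂Q < 0 := by
  have hsum : ∫ z, foldedFst k' z ∂Q + ∫ z, foldedFst k z ∂Q ≤ 0 := by
    rw [← integral_add (integrable_foldedFst h0 k') (integrable_foldedFst h0 k)]
    exact integral_nonpos_of_ae <| hae.mono fun z hz => foldedFst_add_foldedFst_nonpos h hz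
  linarith

end Folding

theorem reduced_frechet_lt {ι E : Type*} [NormedAddCommGroup E] {m : ι → ℝ} {k₀ : ι}
    (hpos : 0 < m k₀) (hneg : ∀ k ≠ k₀, m k < 0) (μ : E) {q : ι × ℝ × E} (hq : 0 ≤ q.2.1)
    (hne : q ≠ (k₀, m k₀, μ)) :
    -m k₀ ^ 2 < (q.2.1 - m q.1) ^ 2 - m q.1 ^ 2 + ‖q.2.2 - μ‖ ^ 2 := by
  obtain ⟨k, a, v⟩ := q
  dsimp only at hq ⊢
  rcases eq_or_ne k k₀ with rfl | hk
  · have hav : a ≠ m k ∨ v ≠ μ := by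
      by_contra! h
      exact hne (by rw [h.1, h.2])
    rcases hav with ha | hv
    · have : 0 < (a - m k) ^ 2 := by positivity [sub_ne_zero.mpr ha]
      nlinarith [norm_nonneg (v - μ)]
    · have : 0 < ‖v - μ‖ := norm_pos_iff.mpr (sub_ne_zero.mpr hv)
      nlinarith [sq_nonneg (a - m k)]
  · nlinarith [hneg k hk, norm_nonneg (v - μ)]

section OpenBook

variable {K D : ℕ}

theorem obDist_sq (p z : Fin K × ℝ × EuclideanSpace ℝ (Fin D)) :
    obDist p z ^ 2 = p.2.1 ^ 2 - 2 * p.2.1 * foldedFst p.1 z + z.2.1 ^ 2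
      + (‖p.2.2‖ ^ 2 - 2 * inner ℝ p.2.2 z.2.2 + ‖z.2.2‖ ^ 2) := by
  have hnonneg : 0 ≤ (if p.1 = z.1 then (p.2.1 - z.2.1) ^ 2 else (p.2.1 + z.2.1) ^ 2) := by
    split_ifs <;> positivity
  rw [obDist, Real.sq_sqrt (by positivity), norm_sub_sq_real, foldedFst]
  by_cases h : z.1 = p.1
  · rw [if_pos h.symm, if_pos h]; ring
  · rw [if_neg (Ne.symm h), if_neg h]; ring

theorem integral_obDist_sq (Q : Measure (Fin K × ℝ × EuclideanSpace ℝ (Fin D)))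
    [IsProbabilityMeasure Q] (h0sq : Integrable (fun z => z.2.1 ^ 2) Q)
    (h0 : Integrable (fun z => z.2.1) Q) (h1sq : Integrable (fun z => ‖z.2.2‖ ^ 2) Q)
    (h1 : Integrable (fun z => z.2.2) Q) (p : Fin K × ℝ × EuclideanSpace ℝ (Fin D)) :
    ∫ z, obDist p z ^ 2 ∂Q
      = (p.2.1 - ∫ z, foldedFst p.1 z ∂Q) ^ 2 - (∫ z, foldedFst p.1 z ∂Q) ^ 2
        + ‖p.2.2 - ∫ z, z.2.2 ∂Q‖ ^ 2
        + (∫ z, z.2.1 ^ 2 ∂Q + ∫ z, ‖z.2.2‖ ^ 2 ∂Q - ‖∫ z, z.2.2 ∂Q‖ ^ 2) := by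
  obtain ⟨k, a, v⟩ := p
  have hfold := integrable_foldedFst h0 k
  have hinner := h1.const_inner (𝕜 := ℝ) v
  simp_rw [obDist_sq]
  rw [integral_add, integral_add, integral_sub, integral_add, integral_sub, integral_const_mul,
    integral_const_mul, integral_const, integral_const, integral_inner h1, norm_sub_sq_real]
  · simp only [probReal_univ, smul_eq_mul, one_mul]
    ring
  all_goals fun_prop

end OpenBook

/-- On the open book, if the folded first-coordinate mean `m_k` is positive for
some leaf `k` (hence `m_{k'} < 0` for all other leaves), then the Fréchet mean of `Q` exists,
is unique, and equals `(k; m_k, μ_{1D})`: a point is a minimizer of the Fréchet function iff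
it lies in the open leaf `S_k` with zeroth coordinate `m_k` and spine coordinates `μ_{1D}`. -/
theorem stmt8 {K D : ℕ}
    (Q : Measure (Fin K × ℝ × EuclideanSpace ℝ (Fin D))) [IsProbabilityMeasure Q]
    (hae : ∀ᵐ z ∂Q, 0 ≤ z.2.1)
    (h0sq : Integrable (fun z => z.2.1 ^ 2) Q)
    (h0 : Integrable (fun z => z.2.1) Q)
    (h1sq : Integrable (fun z => ‖z.2.2‖ ^ 2) Q)
    (h1 : Integrable (fun z => z.2.2) Q)
    (m : Fin K → ℝ)
    (hm : ∀ k, m k = ∫ z, (if z.1 = k then z.2.1 else -z.2.1) ∂Q)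
    (k₀ : Fin K) (hpos : 0 < m k₀)
    (μ1D : EuclideanSpace ℝ (Fin D)) (hμ : μ1D = ∫ z, z.2.2 ∂Q) :
    (∀ k' ≠ k₀, m k' < 0) ∧
    (∀ p : Fin K × ℝ × EuclideanSpace ℝ (Fin D), 0 ≤ p.2.1 →
      ((∀ q : Fin K × ℝ × EuclideanSpace ℝ (Fin D), 0 ≤ q.2.1 →
          ∫ z, obDist p z ^ 2 ∂Q ≤ ∫ z, obDist q z ^ 2 ∂Q)
        ↔ (p.1 = k₀ ∧ p.2.1 = m k₀ ∧ p.2.2 = μ1D))) := by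
  have hm' : ∀ k, m k = ∫ z, foldedFst k z ∂Q := hm
  have hneg : ∀ k' ≠ k₀, m k' < 0 := fun k' hk' => by
    rw [hm'] at hpos ⊢
    exact integral_foldedFst_neg_of_ne hae h0 hpos hk'
  refine ⟨hneg, fun p hp => ?_⟩
  have hF : ∀ q : Fin K × ℝ × EuclideanSpace ℝ (Fin D), ∫ z, obDist q z ^ 2 ∂Q
      = (q.2.1 - m q.1) ^ 2 - m q.1 ^ 2 + ‖q.2.2 - μ1D‖ ^ 2
        + (∫ z, z.2.1 ^ 2 ∂Q + ∫ z, ‖z.2.2‖ ^ 2 ∂Q - ‖μ1D‖ ^ 2) := fun q => by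
    rw [integral_obDist_sq Q h0sq h0 h1sq h1, ← hm', ← hμ]
  have hunique := forall_le_iff_eq_of_forall_lt (s := {q | 0 ≤ q.2.1})
    (f := fun q => ∫ z, obDist q z ^ 2 ∂Q) (x := (k₀, m k₀, μ1D)) hpos.le
    (fun q hq hne => by
      simp only [hF, sub_self, norm_zero]
      linarith [reduced_frechet_lt hpos hneg μ1D hq hne]) hp
  simpa only [Prod.ext_iff, Set.mem_ofPred_eq] using hunique
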